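/- For integers a, c and N ≥ 1 with N ∤ a, and t > 0, log g_a(c/N + it) = πic·B(a/N) − πt·N·B(a/N) − ∑_{m,n≥1, n≡a mod N} (ζ^{acm}/m)·exp(−2πmnt) − ∑_{m,n≥1, n≡−a mod N} (ζ^{−acm}/m)·exp(−2πmnt), where ζ = exp(2πi/N). -/

import Mathlib

open Real

/-- The second Bernoulli polynomial at the fractional part: `B(x) = {x}² - {x} + 1/6`. -/
noncomputable def B2 (x : ℝ) : ℝ := Int.fract x ^ 2 - Int.fract x + 1 / 6

/-- The root of unity `ζ_N = exp(2πi/N)`. -/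
noncomputable def zetaN (N : ℤ) : ℂ := Complex.exp (2 * π * Complex.I / N)

/-- The branch of `log g_a(τ)` given by `πiτ·N·B(a/N)` plus the sum of principal
logarithms `log(1-qⁿ)` over `n ≡ ±a (mod N)`, where `q = exp(2πiτ)`. -/
noncomputable def logG (N a : ℤ) (τ : ℂ) : ℂ :=
  π * Complex.I * τ * N * (B2 ((a : ℝ) / N) : ℂ) +
    (∑' n : ℕ+, if (n : ℤ) ≡ a [ZMOD N] then
        Complex.log (1 - Complex.exp (2 * π * Complex.I * τ) ^ (n : ℕ)) else 0) +
    ∑' n : ℕ+, if (n : ℤ) ≡ -a [ZMOD N] then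
        Complex.log (1 - Complex.exp (2 * π * Complex.I * τ) ^ (n : ℕ)) else 0

/-!
Put `q = exp(2πi(c/N + it))`. Then `qⁿ = ζ^{nc} e^{-2πnt}` has modulus `< 1`, so
`log(1 - qⁿ) = -∑ₘ q^{nm}/m`, and for `n ≡ b (mod N)` the root of unity `ζ^{ncm}` equals
`ζ^{bcm}`. The resulting double series is dominated by `∑ e^{-2πmnt}`, hence absolutely
convergent, and may be summed over `m` and then `n`. The leading term `πiτ·N·B(a/N)` splits
as `πic·B(a/N) - πtN·B(a/N)`.
-/

lemma hasSum_pnat_pow_div_neg_log {z : ℂ} (hz : ‖z‖ < 1) :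
    HasSum (fun m : ℕ+ => z ^ (m : ℕ) / (m : ℂ)) (-Complex.log (1 - z)) := by
  refine hasSum_pnat_iff (f := fun m : ℕ => z ^ m / (m : ℂ)) |>.mpr ?_
  simpa only [Nat.cast_zero, div_zero, add_zero] using Complex.hasSum_taylorSeries_neg_log hz

lemma norm_zetaN_zpow (N k : ℤ) : ‖zetaN N ^ k‖ = 1 := by
  have : zetaN N = Complex.exp (((2 * π / N : ℝ) : ℂ) * Complex.I) := by
    rw [zetaN]; push_cast; ring_nf
  rw [norm_zpow, this, Complex.norm_exp_ofReal_mul_I, one_zpow]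

lemma zetaN_zpow_self {N : ℤ} (hN : N ≠ 0) : zetaN N ^ N = 1 := by
  rw [zetaN, ← Complex.exp_int_mul, mul_div_cancel₀ _ (Int.cast_ne_zero.mpr hN),
    Complex.exp_two_pi_mul_I]

lemma zetaN_zpow_eq_of_modEq {N k l : ℤ} (hN : N ≠ 0) (h : k ≡ l [ZMOD N]) :
    zetaN N ^ k = zetaN N ^ l := by
  obtain ⟨j, hj⟩ := h.dvd
  have hz : zetaN N ≠ 0 := Complex.exp_ne_zero _
  rw [show l = k + N * j by omega, zpow_add₀ hz, zpow_mul,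
    zetaN_zpow_self hN, one_zpow, mul_one]

lemma exp_two_pi_I_mul_pow {N : ℤ} (hN : N ≠ 0) (c : ℤ) (t : ℝ) (n : ℕ) :
    Complex.exp (2 * π * Complex.I * ((c : ℂ) / N + Complex.I * t)) ^ n =
      zetaN N ^ ((n : ℤ) * c) * Real.exp (-(2 * π * n * t)) := by
  rw [zetaN, ← Complex.exp_int_mul, ← Complex.exp_nat_mul, Complex.ofReal_exp,
    ← Complex.exp_add]
  congr 1
  field_simp [Int.cast_ne_zero.mpr hN]
  push_cast
  ring_nf
  rw [Complex.I_sq]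
  ring

lemma summable_pow_pnat_mul {r : ℝ} (hr0 : 0 ≤ r) (hr1 : r < 1) :
    Summable fun p : ℕ+ × ℕ+ => r ^ ((p.1 : ℕ) * p.2) := by
  have hgeo := summable_geometric_of_lt_one hr0 hr1
  have hprod : Summable fun p : ℕ+ × ℕ+ => r ^ p.1.natPred * r ^ (p.2 : ℕ) :=
    Summable.mul_of_nonneg (f := fun m : ℕ+ => r ^ m.natPred) (g := fun n : ℕ+ => r ^ (n : ℕ))
      (Equiv.pnatEquivNat.summable_iff.mpr hgeo) (summable_pnat_iff_summable_nat.mpr hgeo)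
      (fun _ => pow_nonneg hr0 _) (fun _ => pow_nonneg hr0 _)
  refine hprod.of_nonneg_of_le (fun _ => pow_nonneg hr0 _) fun ⟨m, n⟩ => ?_
  rw [← pow_add]
  refine pow_le_pow_of_le_one hr0 hr1.le ?_
  dsimp only
  -- `m * n ≥ (m - 1) + n` bounds the series by a product of two geometric series
  rw [← PNat.natPred_add_one m, add_one_mul]
  have : 1 ≤ (n : ℕ) := n.pos
  nlinarith

noncomputable def expansionTerm (N b c : ℤ) (t : ℝ) (p : ℕ+ × ℕ+) : ℂ :=
  if (p.2 : ℤ) ≡ b [ZMOD N] then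
    zetaN N ^ (b * c * (p.1 : ℤ)) / (p.1 : ℂ) *
      Real.exp (-(2 * π * (p.1 : ℝ) * (p.2 : ℝ) * t))
  else 0

lemma summable_expansionTerm (N b c : ℤ) {t : ℝ} (ht : 0 < t) :
    Summable (expansionTerm N b c t) := by
  have hr1 : Real.exp (-(2 * π * t)) < 1 := Real.exp_lt_one_iff.mpr (by nlinarith [Real.pi_pos])
  refine (summable_pow_pnat_mul (Real.exp_pos _).le hr1).of_norm_bounded fun p => ?_
  unfold expansionTerm
  split_ifs
  · rw [norm_mul, norm_div, norm_zetaN_zpow, Complex.norm_real,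
      Real.norm_of_nonneg (Real.exp_pos _).le, Complex.norm_natCast, ← Real.exp_nat_mul]
    calc 1 / (p.1 : ℝ) * Real.exp (-(2 * π * (p.1 : ℝ) * (p.2 : ℝ) * t))
        ≤ Real.exp (-(2 * π * (p.1 : ℝ) * (p.2 : ℝ) * t)) :=
          mul_le_of_le_one_left (Real.exp_pos _).le
            (div_le_one_of_le₀ (Nat.one_le_cast.mpr p.1.pos) (by positivity))
      _ = Real.exp (((p.1 : ℕ) * (p.2 : ℕ) : ℕ) * -(2 * π * t)) := by push_cast; ring_nf
  · rw [norm_zero]; positivity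

lemma hasSum_expansionTerm_fiber {N : ℤ} (hN : N ≠ 0) (b c : ℤ) {t : ℝ} (ht : 0 < t)
    (n : ℕ+) :
    HasSum (fun m => expansionTerm N b c t (m, n))
      (if (n : ℤ) ≡ b [ZMOD N] then
        -Complex.log
          (1 - Complex.exp (2 * π * Complex.I * ((c : ℂ) / N + Complex.I * t)) ^ (n : ℕ))
      else 0) := by
  unfold expansionTerm
  split_ifs with hn
  · have hlt :
        ‖Complex.exp (2 * π * Complex.I * ((c : ℂ) / N + Complex.I * t)) ^ (n : ℕ)‖ < 1 := by
      rw [exp_two_pi_I_mul_pow hN, norm_mul, norm_zetaN_zpow, one_mul, Complex.norm_real,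
        Real.norm_of_nonneg (Real.exp_pos _).le, Real.exp_lt_one_iff, neg_lt_zero]
      have : (0 : ℝ) < n := by exact_mod_cast n.pos
      positivity
    convert hasSum_pnat_pow_div_neg_log hlt using 2 with m
    have hcong : (((n * m : ℕ) : ℤ) * c) ≡ b * c * m [ZMOD N] := by
      convert hn.mul_right (c * m) using 1 <;> push_cast <;> ring
    rw [← pow_mul, exp_two_pi_I_mul_pow hN, zetaN_zpow_eq_of_modEq hN hcong]
    push_cast
    ring_nf
  · exact hasSum_zero

lemma tsum_ite_log_one_sub_exp_pow {N : ℤ} (hN : N ≠ 0) (b c : ℤ) {t : ℝ} (ht : 0 < t) :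
    (∑' n : ℕ+, if (n : ℤ) ≡ b [ZMOD N] then
        Complex.log
          (1 - Complex.exp (2 * π * Complex.I * ((c : ℂ) / N + Complex.I * t)) ^ (n : ℕ))
      else 0) = -∑' p, expansionTerm N b c t p := by
  have hswap := (Equiv.prodComm ℕ+ ℕ+).hasSum_iff.mpr (summable_expansionTerm N b c ht).hasSum
  rw [← (hswap.prod_fiberwise (hasSum_expansionTerm_fiber hN b c ht)).tsum_eq, ← tsum_neg]
  congr 1 with n
  split_ifs <;> simp

theorem logG_expansion_general (N a c : ℤ) (hN : 1 ≤ N) (t : ℝ) (ht : 0 < t) :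
    logG N a ((c : ℂ) / N + Complex.I * t) =
      π * Complex.I * c * (B2 ((a : ℝ) / N) : ℂ) - π * t * N * (B2 ((a : ℝ) / N) : ℂ) -
        (∑' p : ℕ+ × ℕ+, if (p.2 : ℤ) ≡ a [ZMOD N] then
            zetaN N ^ (a * c * (p.1 : ℤ)) / (p.1 : ℂ) *
              Real.exp (-(2 * π * (p.1 : ℝ) * (p.2 : ℝ) * t)) else 0) -
        ∑' p : ℕ+ × ℕ+, if (p.2 : ℤ) ≡ -a [ZMOD N] then
            zetaN N ^ (-(a * c * (p.1 : ℤ))) / (p.1 : ℂ) *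
              Real.exp (-(2 * π * (p.1 : ℝ) * (p.2 : ℝ) * t)) else 0 := by
  have hN0 : N ≠ 0 := by omega
  rw [logG, tsum_ite_log_one_sub_exp_pow hN0 a c ht,
    tsum_ite_log_one_sub_exp_pow hN0 (-a) c ht]
  have hmain : π * Complex.I * ((c : ℂ) / N + Complex.I * t) * N =
      π * Complex.I * c - π * t * N := by
    field_simp [Int.cast_ne_zero.mpr hN0]
    ring_nf
    rw [Complex.I_sq]
    ring
  rw [hmain]
  simp only [expansionTerm, neg_mul]
  ring

/-- Expansion of `log g_a(c/N + it)` (Lemma 1, first expansion):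
`log g_a(c/N+it) = πic·B(a/N) - πt·N·B(a/N)
  - ∑_{m,n≥1, n≡a (N)} (ζ^{acm}/m) e^{-2πmnt} - ∑_{m,n≥1, n≡-a (N)} (ζ^{-acm}/m) e^{-2πmnt}`. -/
theorem logG_expansion (N a c : ℤ) (hN : 1 ≤ N) (ha : ¬ (N ∣ a)) (t : ℝ) (ht : 0 < t) :
    logG N a ((c : ℂ) / N + Complex.I * t) =
      π * Complex.I * c * (B2 ((a : ℝ) / N) : ℂ) - π * t * N * (B2 ((a : ℝ) / N) : ℂ) -
        (∑' p : ℕ+ × ℕ+, if (p.2 : ℤ) ≡ a [ZMOD N] then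
            zetaN N ^ (a * c * (p.1 : ℤ)) / (p.1 : ℂ) *
              Real.exp (-(2 * π * (p.1 : ℝ) * (p.2 : ℝ) * t)) else 0) -
        ∑' p : ℕ+ × ℕ+, if (p.2 : ℤ) ≡ -a [ZMOD N] then
            zetaN N ^ (-(a * c * (p.1 : ℤ))) / (p.1 : ℂ) *
              Real.exp (-(2 * π * (p.1 : ℝ) * (p.2 : ℝ) * t)) else 0 :=
  logG_expansion_general N a c hN t ht
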